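/- arXiv:2410.14591 — 3 statements merged into one kernel-verified Lean document; each statement's English description precedes it below -/
import Mathlib

section
/- The topological dual of KRu(Z) is isometrically isomorphic to Lip(Z): (KRu(Z))* ≅ Lip(Z), where the pairing is given by integration against measures in M_1(Z) and extended by continuity. -/
open MeasureTheory Filter Topology
open scoped ENNReal NNReal

noncomputable section
attribute [local instance] Classical.propDecidable

variable {Z : Type*} [MetricSpace Z] [MeasurableSpace Z] [BorelSpace Z]

/-- Integral `∫ f dμ` of a function against a finite signed measure, via Jordan decomposition. -/
def sInteg (μ : SignedMeasure Z) (f : Z → ℝ) : ℝ :=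
  (∫ z, f z ∂μ.toJordanDecomposition.posPart) - ∫ z, f z ∂μ.toJordanDecomposition.negPart

/-- Total variation norm `‖μ‖_TV`. -/
def tvNorm (μ : SignedMeasure Z) : ℝ := (μ.totalVariation Set.univ).toReal

/-- The unbalanced Kantorovich–Rubinstein norm
`‖μ‖_KRu = |μ(Z)| + sup { ∫ f dμ : f(e) = 0, Lip(f) ≤ 1 }`. -/
def kruNorm (e : Z) (μ : SignedMeasure Z) : ℝ :=
  |μ Set.univ| +
    sSup {r : ℝ | ∃ f : Z → ℝ, f e = 0 ∧ LipschitzWith 1 f ∧ r = sInteg μ f}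

/-- The balanced Kantorovich–Rubinstein norm `‖μ‖_KR = sup { ∫ f dμ : f(e) = 0, Lip(f) ≤ 1 }`. -/
def krNorm (e : Z) (μ : SignedMeasure Z) : ℝ :=
  sSup {r : ℝ | ∃ f : Z → ℝ, f e = 0 ∧ LipschitzWith 1 f ∧ r = sInteg μ f}

/-- `μ ∈ M_1(Z)`: finite first moment, `∫ d(z,e) d|μ| < ∞`. -/
def MemM1 (e : Z) (μ : SignedMeasure Z) : Prop :=
  (∫⁻ z, ENNReal.ofReal (dist z e) ∂μ.totalVariation) < ⊤

/-- `μ ∈ M_p(Z)`: finite `p`-th moment, `∫ d(z,e)^p d|μ| < ∞`. -/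
def MemMp (e : Z) (p : ℝ) (μ : SignedMeasure Z) : Prop :=
  (∫⁻ z, ENNReal.ofReal (dist z e ^ p) ∂μ.totalVariation) < ⊤

/-- `∫ (1 + d(z,e)^p) d|μ|` as an extended nonnegative real number. -/
def momLint (e : Z) (p : ℝ) (μ : SignedMeasure Z) : ℝ≥0∞ :=
  ∫⁻ z, ENNReal.ofReal (1 + dist z e ^ p) ∂μ.totalVariation

/-- Dirac measure at a point, as a signed measure. -/
def diracSM (x : Z) : SignedMeasure Z := (Measure.dirac x).toSignedMeasure

/-- The regularizer `G_{α,β}(μ) = α‖μ‖_KRu + β ∫ (1 + d(z,e)^p) d|μ|` if `μ ∈ M_p(Z)`,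
and `+∞` otherwise, as an extended real number. -/
def Gab (e : Z) (p α β : ℝ) (μ : SignedMeasure Z) : EReal :=
  if MemMp e p μ then ((α * kruNorm e μ + β * (momLint e p μ).toReal : ℝ) : EReal) else ⊤

/-- A geodesic metric space: any two points are joined by points realizing all
intermediate distance proportions. -/
def IsGeodesic (Z : Type*) [MetricSpace Z] : Prop :=
  ∀ x y : Z, ∀ t : ℝ, 0 ≤ t → t ≤ 1 →
    ∃ z : Z, dist x z = t * dist x y ∧ dist z y = (1 - t) * dist x y

/-- The Lipschitz constant of a function. -/
def lipConst (f : Z → ℝ) : ℝ :=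
  sInf {K : ℝ | 0 ≤ K ∧ ∀ x y : Z, |f x - f y| ≤ K * dist x y}

/-- The norm on the space of Lipschitz functions: `‖f‖_Lip = max {|f(e)|, L(f)}`. -/
def lipNorm (e : Z) (f : Z → ℝ) : ℝ := max |f e| (lipConst f)

/-!
Integration against a signed measure is linear in the measure, and splitting
`f = (f - f e) + f e` gives `|∫ f dμ| ≤ L(f) ‖μ‖_KR + |f e| |μ(Z)| ≤ ‖f‖_Lip ‖μ‖_KRu`.
Testing against `δ_e` and `δ_x - δ_y`, whose `KRu`-norms are at most `1` and `d(x, y)`,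
shows that no smaller constant works. Conversely, a `KRu`-bounded linear functional `Φ` on
`M_1(Z)` is represented by `f(x) = Φ(δ_x)`, which is Lipschitz by the same test measures:
`Φ` and `μ ↦ ∫ f dμ` agree on finite combinations of Dirac masses, and these are `KRu`-dense
in `M_1(Z)`. Indeed, if `π_n → id` are the simple-function approximations of the identity of
the separable space `Z`, with `d(π_n z, z) ≤ d(z, e)`, then the push-forward of `μ` along `π_n`
has the same mass as `μ` and is `KRu`-close to it by `∫ d(π_n z, z) d|μ| → 0`.
-/

section SignedIntegral

variable {X : Type*} [MeasurableSpace X]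

theorem posPart_le_totalVariation (σ : SignedMeasure X) :
    σ.toJordanDecomposition.posPart ≤ σ.totalVariation :=
  Measure.le_add_right le_rfl

theorem negPart_le_totalVariation (σ : SignedMeasure X) :
    σ.toJordanDecomposition.negPart ≤ σ.totalVariation :=
  Measure.le_add_left le_rfl

theorem sInteg_eq_integral_sub_integral {a b : Measure X} [IsFiniteMeasure a] [IsFiniteMeasure b]
    {σ : SignedMeasure X} (hσ : σ = a.toSignedMeasure - b.toSignedMeasure) {f : X → ℝ}
    (ha : Integrable f a) (hb : Integrable f b) :
    sInteg σ f = (∫ x, f x ∂a) - ∫ x, f x ∂b := by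
  have hjd : σ.toJordanDecomposition = Measure.jordanDecompositionOfToSignedMeasureSub a b := by
    rw [hσ, Measure.toJordanDecomposition_toSignedMeasure_sub]
  have hcross : a - b + b = a + (b - a) := by
    rw [← Measure.toSignedMeasure_eq_toSignedMeasure_iff, Measure.toSignedMeasure_add,
      Measure.toSignedMeasure_add, ← sub_eq_sub_iff_add_eq_add,
      ← Measure.sub_toSignedMeasure_eq_toSignedMeasure_sub]
  have hint : ∫ x, f x ∂(a - b) + ∫ x, f x ∂b = ∫ x, f x ∂a + ∫ x, f x ∂(b - a) := by
    rw [← integral_add_measure (ha.mono_measure Measure.sub_le) hb,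
      ← integral_add_measure ha (hb.mono_measure Measure.sub_le), hcross]
  rw [sInteg, hjd, Measure.jordanDecompositionOfToSignedMeasureSub_posPart,
    Measure.jordanDecompositionOfToSignedMeasureSub_negPart]
  linarith

theorem sInteg_smul (c : ℝ) (σ : SignedMeasure X) (f : X → ℝ) :
    sInteg (c • σ) f = c * sInteg σ f := by
  simp only [sInteg, SignedMeasure.toJordanDecomposition_smul_real]
  rcases le_or_gt 0 c with hc | hc
  · rw [JordanDecomposition.real_smul_posPart_nonneg _ _ hc,
      JordanDecomposition.real_smul_negPart_nonneg _ _ hc, integral_smul_nnreal_measure,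
      integral_smul_nnreal_measure, NNReal.smul_def, NNReal.smul_def, Real.coe_toNNReal _ hc]
    simp only [smul_eq_mul]
    ring
  · rw [JordanDecomposition.real_smul_posPart_neg _ _ hc,
      JordanDecomposition.real_smul_negPart_neg _ _ hc, integral_smul_nnreal_measure,
      integral_smul_nnreal_measure, NNReal.smul_def, NNReal.smul_def,
      Real.coe_toNNReal _ (neg_nonneg.2 hc.le)]
    simp only [smul_eq_mul]
    ring

theorem sInteg_neg (σ : SignedMeasure X) (f : X → ℝ) : sInteg (-σ) f = -sInteg σ f := by
  rw [← neg_one_smul ℝ σ, sInteg_smul]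
  ring

theorem sInteg_add {μ ν : SignedMeasure X} {f : X → ℝ} (hμ : Integrable f μ.totalVariation)
    (hν : Integrable f ν.totalVariation) : sInteg (μ + ν) f = sInteg μ f + sInteg ν f := by
  have hμp := hμ.mono_measure (posPart_le_totalVariation μ)
  have hμn := hμ.mono_measure (negPart_le_totalVariation μ)
  have hνp := hν.mono_measure (posPart_le_totalVariation ν)
  have hνn := hν.mono_measure (negPart_le_totalVariation ν)
  have hrepr : μ + ν =
      (μ.toJordanDecomposition.posPart + ν.toJordanDecomposition.posPart).toSignedMeasure -
        (μ.toJordanDecomposition.negPart + ν.toJordanDecomposition.negPart).toSignedMeasure := by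
    rw [Measure.toSignedMeasure_add, Measure.toSignedMeasure_add]
    conv_lhs =>
      rw [← μ.toSignedMeasure_toJordanDecomposition, ← ν.toSignedMeasure_toJordanDecomposition]
    simp only [JordanDecomposition.toSignedMeasure]
    abel
  rw [sInteg_eq_integral_sub_integral hrepr (hμp.add_measure hνp) (hμn.add_measure hνn),
    integral_add_measure hμp hνp, integral_add_measure hμn hνn, sInteg, sInteg]
  ring

theorem sInteg_sub {μ ν : SignedMeasure X} {f : X → ℝ} (hμ : Integrable f μ.totalVariation)
    (hν : Integrable f ν.totalVariation) : sInteg (μ - ν) f = sInteg μ f - sInteg ν f := by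
  rw [sub_eq_add_neg, sInteg_add hμ (by rwa [SignedMeasure.totalVariation_neg]), sInteg_neg,
    sub_eq_add_neg]

theorem totalVariation_diracSM (x : X) : (diracSM x).totalVariation = Measure.dirac x := by
  rw [diracSM, SignedMeasure.totalVariation_eq_variation, Measure.variation_toSignedMeasure]

theorem sInteg_diracSM [MeasurableSingletonClass X] (x : X) (f : X → ℝ) :
    sInteg (diracSM x) f = f x := by
  have hσ : diracSM x = (Measure.dirac x).toSignedMeasure - (0 : Measure X).toSignedMeasure := by
    rw [Measure.toSignedMeasure_zero, sub_zero, diracSM]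
  rw [sInteg_eq_integral_sub_integral hσ (integrable_dirac enorm_lt_top) (integrable_zero_measure),
    integral_dirac, integral_zero_measure, sub_zero]

theorem sInteg_diracSM_sub_diracSM [MeasurableSingletonClass X] (x y : X) (f : X → ℝ) :
    sInteg (diracSM x - diracSM y) f = f x - f y := by
  rw [sInteg_sub (by rw [totalVariation_diracSM]; exact integrable_dirac enorm_lt_top)
    (by rw [totalVariation_diracSM]; exact integrable_dirac enorm_lt_top),
    sInteg_diracSM, sInteg_diracSM]

theorem sInteg_const (σ : SignedMeasure X) (c : ℝ) : sInteg σ (fun _ => c) = c * σ Set.univ := by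
  rw [sInteg, integral_const, integral_const,
    σ.apply_eq_posPart_real_sub_negPart_real MeasurableSet.univ, smul_eq_mul, smul_eq_mul]
  ring

theorem diracSM_apply_univ [MeasurableSingletonClass X] (x : X) : diracSM x Set.univ = 1 := by
  simpa using (sInteg_const (diracSM x) 1).symm.trans (sInteg_diracSM x _)

theorem sInteg_const_mul (σ : SignedMeasure X) (c : ℝ) (f : X → ℝ) :
    sInteg σ (fun x => c * f x) = c * sInteg σ f := by
  rw [sInteg, integral_const_mul, integral_const_mul, sInteg, mul_sub]

theorem sInteg_fun_sub {σ : SignedMeasure X} {f g : X → ℝ} (hf : Integrable f σ.totalVariation)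
    (hg : Integrable g σ.totalVariation) :
    sInteg σ (fun x => f x - g x) = sInteg σ f - sInteg σ g := by
  rw [sInteg, integral_sub (hf.mono_measure (posPart_le_totalVariation σ))
      (hg.mono_measure (posPart_le_totalVariation σ)),
    integral_sub (hf.mono_measure (negPart_le_totalVariation σ))
      (hg.mono_measure (negPart_le_totalVariation σ)), sInteg, sInteg]
  ring

theorem abs_sInteg_le_integral_abs {σ : SignedMeasure X} {f : X → ℝ}
    (hf : Integrable f σ.totalVariation) : |sInteg σ f| ≤ ∫ x, |f x| ∂σ.totalVariation := by
  have hp := hf.mono_measure (posPart_le_totalVariation σ)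
  have hn := hf.mono_measure (negPart_le_totalVariation σ)
  calc |sInteg σ f| ≤ |∫ x, f x ∂σ.toJordanDecomposition.posPart| +
        |∫ x, f x ∂σ.toJordanDecomposition.negPart| := abs_sub _ _
    _ ≤ (∫ x, |f x| ∂σ.toJordanDecomposition.posPart) +
        ∫ x, |f x| ∂σ.toJordanDecomposition.negPart :=
      add_le_add (abs_integral_le_integral_abs) (abs_integral_le_integral_abs)
    _ = ∫ x, |f x| ∂σ.totalVariation := (integral_add_measure hp.abs hn.abs).symm

theorem integral_comp_simpleFunc {Y : Type*} (m : Measure X) [IsFiniteMeasure m]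
    (π : SimpleFunc X Y) (g : Y → ℝ) :
    ∫ x, g (π x) ∂m = ∑ y ∈ π.range, m.real (π ⁻¹' {y}) * g y := by
  have hsum : (fun x => g (π x)) =
      fun x => ∑ y ∈ π.range, (π ⁻¹' {y}).indicator (fun _ => g y) x := by
    funext x
    rw [Finset.sum_eq_single (π x) (fun y _ hy => by simp [Ne.symm hy])
      (fun h => absurd (π.mem_range_self x) h)]
    simp
  rw [hsum, integral_finsetSum _ fun y _ =>
    (integrable_const (g y)).indicator (π.measurableSet_preimage _)]
  simp [integral_indicator_const _ (π.measurableSet_preimage _)]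

theorem sInteg_comp_simpleFunc {Y : Type*} (σ : SignedMeasure X) (π : SimpleFunc X Y)
    (g : Y → ℝ) :
    sInteg σ (fun x => g (π x)) = ∑ y ∈ π.range, σ (π ⁻¹' {y}) * g y := by
  simp only [sInteg, integral_comp_simpleFunc, ← Finset.sum_sub_distrib, ← sub_mul,
    σ.apply_eq_posPart_real_sub_negPart_real (π.measurableSet_preimage _)]

end SignedIntegral

section FirstMoment

variable {X : Type*} [MetricSpace X] [MeasurableSpace X] {e : X} {μ ν : SignedMeasure X}

theorem memM1_of_totalVariation_le {m : Measure X} (h : μ.totalVariation ≤ m)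
    (hm : ∫⁻ x, ENNReal.ofReal (dist x e) ∂m < ⊤) : MemM1 e μ :=
  (lintegral_mono' h le_rfl).trans_lt hm

theorem MemM1.add (hμ : MemM1 e μ) (hν : MemM1 e ν) : MemM1 e (μ + ν) := by
  refine memM1_of_totalVariation_le (m := μ.totalVariation + ν.totalVariation) ?_ ?_
  · simpa only [SignedMeasure.totalVariation_eq_variation] using VectorMeasure.variation_add_le
  · rw [lintegral_add_measure]
    exact ENNReal.add_lt_top.2 ⟨hμ, hν⟩

theorem MemM1.smul (c : ℝ) (hμ : MemM1 e μ) : MemM1 e (c • μ) := by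
  rw [MemM1, SignedMeasure.totalVariation_eq_variation, VectorMeasure.variation_smul,
    lintegral_smul_measure, ← SignedMeasure.totalVariation_eq_variation]
  exact ENNReal.mul_lt_top ENNReal.coe_lt_top hμ

theorem MemM1.sub (hμ : MemM1 e μ) (hν : MemM1 e ν) : MemM1 e (μ - ν) := by
  rw [sub_eq_add_neg, ← neg_one_smul ℝ ν]
  exact hμ.add (hν.smul (-1))

theorem memM1_zero : MemM1 e (0 : SignedMeasure X) := by
  simp [MemM1, SignedMeasure.totalVariation_zero]

theorem memM1_diracSM [MeasurableSingletonClass X] (e x : X) : MemM1 e (diracSM x) := by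
  rw [MemM1, totalVariation_diracSM, lintegral_dirac]
  exact ENNReal.ofReal_lt_top

theorem memM1_sum_smul_diracSM [MeasurableSingletonClass X] (s : Finset X) (c : X → ℝ) :
    MemM1 e (∑ y ∈ s, c y • diracSM y) :=
  Finset.sum_induction _ (MemM1 e) (fun _ _ => MemM1.add) memM1_zero
    fun y _ => (memM1_diracSM e y).smul (c y)

variable [OpensMeasurableSpace X]

theorem MemM1.integrable_dist (hμ : MemM1 e μ) :
    Integrable (fun x => dist x e) μ.totalVariation := by
  refine ⟨(continuous_id.dist continuous_const).aestronglyMeasurable, ?_⟩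
  rw [hasFiniteIntegral_iff_ofReal (Eventually.of_forall fun _ => dist_nonneg)]
  exact hμ

theorem MemM1.integrable_of_lipschitzWith (hμ : MemM1 e μ) {f : X → ℝ} {K : ℝ≥0}
    (hf : LipschitzWith K f) : Integrable f μ.totalVariation := by
  refine ((integrable_const |f e|).add (hμ.integrable_dist.const_mul K)).mono'
    hf.continuous.aestronglyMeasurable (Eventually.of_forall fun x => ?_)
  have hfx := hf.dist_le_mul x e
  rw [Real.dist_eq] at hfx
  rw [Real.norm_eq_abs, Pi.add_apply]
  linarith [abs_sub_abs_le_abs_sub (f x) (f e)]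

end FirstMoment

section KantorovichRubinstein

variable {X : Type*} [MetricSpace X] [MeasurableSpace X] {e : X} {μ : SignedMeasure X}

theorem kruNorm_eq_abs_add_krNorm (e : X) (μ : SignedMeasure X) :
    kruNorm e μ = |μ Set.univ| + krNorm e μ := rfl

theorem krNorm_le {B : ℝ} (hB : 0 ≤ B)
    (h : ∀ g : X → ℝ, g e = 0 → LipschitzWith 1 g → sInteg μ g ≤ B) : krNorm e μ ≤ B :=
  Real.sSup_le (by rintro _ ⟨g, hge, hg, rfl⟩; exact h g hge hg) hB

theorem kruNorm_diracSM_self_le [MeasurableSingletonClass X] (e : X) :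
    kruNorm e (diracSM e) ≤ 1 := by
  have hkr : krNorm e (diracSM e) ≤ 0 :=
    krNorm_le le_rfl fun g hge _ => by rw [sInteg_diracSM, hge]
  rw [kruNorm_eq_abs_add_krNorm, diracSM_apply_univ, abs_one]
  linarith

theorem kruNorm_diracSM_sub_diracSM_le [MeasurableSingletonClass X] (e x y : X) :
    kruNorm e (diracSM x - diracSM y) ≤ dist x y := by
  have hkr : krNorm e (diracSM x - diracSM y) ≤ dist x y :=
    krNorm_le dist_nonneg fun g _ hg => by
      rw [sInteg_diracSM_sub_diracSM]
      exact (le_abs_self _).trans (by simpa [Real.dist_eq] using hg.dist_le_mul x y)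
  simpa [kruNorm_eq_abs_add_krNorm, diracSM_apply_univ] using hkr

variable [OpensMeasurableSpace X]

theorem MemM1.abs_sInteg_le_integral_dist (hμ : MemM1 e μ) {g : X → ℝ} (hge : g e = 0)
    (hg : LipschitzWith 1 g) : |sInteg μ g| ≤ ∫ x, dist x e ∂μ.totalVariation := by
  refine (abs_sInteg_le_integral_abs (hμ.integrable_of_lipschitzWith hg)).trans
    (integral_mono (hμ.integrable_of_lipschitzWith hg).abs hμ.integrable_dist fun x => ?_)
  simpa [hge, Real.dist_eq] using hg.dist_le_mul x e

theorem MemM1.abs_sInteg_le_krNorm (hμ : MemM1 e μ) {g : X → ℝ} (hge : g e = 0)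
    (hg : LipschitzWith 1 g) : |sInteg μ g| ≤ krNorm e μ := by
  have hbdd : BddAbove {r : ℝ | ∃ f : X → ℝ, f e = 0 ∧ LipschitzWith 1 f ∧ r = sInteg μ f} :=
    ⟨_, by rintro _ ⟨f, hfe, hf, rfl⟩; exact le_of_abs_le (hμ.abs_sInteg_le_integral_dist hfe hf)⟩
  have hneg : sInteg μ (-g) = -sInteg μ g := by
    rw [show -g = fun x => -1 * g x by funext x; simp, sInteg_const_mul, neg_one_mul]
  refine abs_le.2 ⟨?_, le_csSup hbdd ⟨g, hge, hg, rfl⟩⟩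
  rw [neg_le, ← hneg]
  exact le_csSup hbdd ⟨-g, by simp [hge], hg.neg, rfl⟩

theorem MemM1.krNorm_nonneg (hμ : MemM1 e μ) : 0 ≤ krNorm e μ :=
  (abs_nonneg _).trans (hμ.abs_sInteg_le_krNorm (g := fun _ => 0) rfl
    ((LipschitzWith.const 0).weaken zero_le_one))

theorem MemM1.kruNorm_nonneg (hμ : MemM1 e μ) : 0 ≤ kruNorm e μ :=
  add_nonneg (abs_nonneg _) hμ.krNorm_nonneg

end KantorovichRubinstein

section LipschitzNorm

variable {X : Type*} [MetricSpace X] {f : X → ℝ}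

theorem lipConst_nonneg : 0 ≤ lipConst f := Real.sInf_nonneg fun _ hK => hK.1

theorem lipConst_le {C : ℝ} (hC : 0 ≤ C) (h : ∀ x y, |f x - f y| ≤ C * dist x y) :
    lipConst f ≤ C :=
  csInf_le ⟨0, fun _ hK => hK.1⟩ ⟨hC, h⟩

theorem lipschitzWith_lipConst (hf : ∃ K : ℝ≥0, LipschitzWith K f) :
    LipschitzWith (lipConst f).toNNReal f := by
  obtain ⟨K, hK⟩ := hf
  refine LipschitzWith.of_dist_le_mul fun x y => ?_
  rw [Real.coe_toNNReal _ lipConst_nonneg]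
  rcases eq_or_ne x y with rfl | hxy
  · simp
  have hd := dist_pos.2 hxy
  rw [← div_le_iff₀ hd, Real.dist_eq]
  exact le_csInf ⟨K, K.2, fun x y => by simpa [Real.dist_eq] using hK.dist_le_mul x y⟩
    fun C hC => (div_le_iff₀ hd).2 (hC.2 x y)

theorem lipNorm_nonneg (e : X) : 0 ≤ lipNorm e f := lipConst_nonneg.trans (le_max_right _ _)

variable [MeasurableSpace X] {e : X}

theorem lipNorm_le_of_forall_abs_sInteg_le [MeasurableSingletonClass X] {C : ℝ} (hC : 0 ≤ C)
    (h : ∀ μ, MemM1 e μ → |sInteg μ f| ≤ C * kruNorm e μ) : lipNorm e f ≤ C := by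
  refine max_le ?_ (lipConst_le hC fun x y => ?_)
  · calc |f e| = |sInteg (diracSM e) f| := by rw [sInteg_diracSM]
      _ ≤ C * kruNorm e (diracSM e) := h _ (memM1_diracSM e e)
      _ ≤ C * 1 := by gcongr; exact kruNorm_diracSM_self_le e
      _ = C := mul_one C
  · calc |f x - f y| = |sInteg (diracSM x - diracSM y) f| := by rw [sInteg_diracSM_sub_diracSM]
      _ ≤ C * kruNorm e (diracSM x - diracSM y) :=
        h _ ((memM1_diracSM e x).sub (memM1_diracSM e y))
      _ ≤ C * dist x y := by gcongr; exact kruNorm_diracSM_sub_diracSM_le e x y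

variable [OpensMeasurableSpace X] {μ : SignedMeasure X}

theorem MemM1.abs_sInteg_le_mul_krNorm (hμ : MemM1 e μ) {g : X → ℝ} {K : ℝ≥0} (hge : g e = 0)
    (hg : LipschitzWith K g) : |sInteg μ g| ≤ K * krNorm e μ := by
  rcases eq_or_ne K 0 with rfl | hK
  · have hg0 : g = fun _ => 0 := funext fun x => by simpa [hge] using hg.dist_le_mul x e
    simp [hg0, sInteg_const]
  have hg1 : LipschitzWith 1 (fun x => (K : ℝ)⁻¹ * g x) := by
    convert (lipschitzWith_smul (K : ℝ)⁻¹).comp hg using 1 <;> ext <;> simp [hK]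
  have hscale : g = fun x => (K : ℝ) * ((K : ℝ)⁻¹ * g x) := by
    funext x; rw [mul_inv_cancel_left₀ (NNReal.coe_ne_zero.2 hK)]
  rw [hscale, sInteg_const_mul, abs_mul, NNReal.abs_eq]
  gcongr
  exact hμ.abs_sInteg_le_krNorm (by simp [hge]) hg1

theorem MemM1.abs_sInteg_le_lipNorm_mul_kruNorm (hμ : MemM1 e μ)
    (hf : ∃ K : ℝ≥0, LipschitzWith K f) : |sInteg μ f| ≤ lipNorm e f * kruNorm e μ := by
  have hL := lipschitzWith_lipConst hf
  have hsplit : sInteg μ (fun x => f x - f e) = sInteg μ f - f e * μ Set.univ := by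
    rw [sInteg_fun_sub (hμ.integrable_of_lipschitzWith hL) (integrable_const _), sInteg_const]
  have hcentered := hμ.abs_sInteg_le_mul_krNorm (sub_self (f e))
    (by simpa using hL.sub (LipschitzWith.const (f e)))
  rw [Real.coe_toNNReal _ lipConst_nonneg] at hcentered
  calc |sInteg μ f| = |sInteg μ (fun x => f x - f e) + f e * μ Set.univ| := by
        rw [hsplit, sub_add_cancel]
    _ ≤ lipConst f * krNorm e μ + |f e| * |μ Set.univ| :=
        (abs_add_le _ _).trans (by rw [abs_mul]; gcongr)
    _ ≤ lipNorm e f * krNorm e μ + lipNorm e f * |μ Set.univ| := by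
        gcongr
        exacts [hμ.krNorm_nonneg, le_max_right _ _, le_max_left _ _]
    _ = lipNorm e f * kruNorm e μ := by rw [kruNorm_eq_abs_add_krNorm]; ring

theorem isLeast_lipNorm (hf : ∃ K : ℝ≥0, LipschitzWith K f) :
    IsLeast {C | 0 ≤ C ∧ ∀ μ, MemM1 e μ → |sInteg μ f| ≤ C * kruNorm e μ} (lipNorm e f) :=
  ⟨⟨lipNorm_nonneg e, fun _ hμ => hμ.abs_sInteg_le_lipNorm_mul_kruNorm hf⟩,
    fun _ hC => lipNorm_le_of_forall_abs_sInteg_le hC.1 hC.2⟩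

end LipschitzNorm

section DualRepresentation

variable {X : Type*} [MetricSpace X] [MeasurableSpace X] {e : X} {μ ν : SignedMeasure X}

structure IsM1Linear (e : X) (Φ : SignedMeasure X → ℝ) : Prop where
  map_add : ∀ μ ν, MemM1 e μ → MemM1 e ν → Φ (μ + ν) = Φ μ + Φ ν
  map_smul : ∀ (c : ℝ) μ, MemM1 e μ → Φ (c • μ) = c * Φ μ

namespace IsM1Linear

variable {Φ : SignedMeasure X → ℝ}

theorem map_sub (hΦ : IsM1Linear e Φ) (hμ : MemM1 e μ) (hν : MemM1 e ν) :
    Φ (μ - ν) = Φ μ - Φ ν := by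
  have hadd := hΦ.map_add (μ - ν) ν (hμ.sub hν) hν
  rw [sub_add_cancel] at hadd
  linarith

theorem map_sum_smul_diracSM [MeasurableSingletonClass X] (hΦ : IsM1Linear e Φ) (s : Finset X)
    (c : X → ℝ) : Φ (∑ y ∈ s, c y • diracSM y) = ∑ y ∈ s, c y * Φ (diracSM y) := by
  induction s using Finset.induction_on with
  | empty => simpa using hΦ.map_smul 0 0 memM1_zero
  | insert y s hy ih =>
    rw [Finset.sum_insert hy, Finset.sum_insert hy,
      hΦ.map_add _ _ ((memM1_diracSM e y).smul _) (memM1_sum_smul_diracSM s c),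
      hΦ.map_smul _ _ (memM1_diracSM e y), ih]

theorem lipschitzWith_diracSM [MeasurableSingletonClass X] [OpensMeasurableSpace X]
    (hΦ : IsM1Linear e Φ) {C : ℝ} (hC : ∀ μ, MemM1 e μ → |Φ μ| ≤ C * kruNorm e μ) :
    LipschitzWith C.toNNReal (fun x => Φ (diracSM x)) := by
  refine LipschitzWith.of_dist_le_mul fun x y => ?_
  have hxy := (memM1_diracSM e x).sub (memM1_diracSM e y)
  rw [Real.dist_eq, ← hΦ.map_sub (memM1_diracSM e x) (memM1_diracSM e y), Real.coe_toNNReal']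
  calc |Φ (diracSM x - diracSM y)| ≤ C * kruNorm e (diracSM x - diracSM y) := hC _ hxy
    _ ≤ max C 0 * kruNorm e (diracSM x - diracSM y) := by
        gcongr
        exacts [hxy.kruNorm_nonneg, le_max_left _ _]
    _ ≤ max C 0 * dist x y := by
        gcongr
        exact kruNorm_diracSM_sub_diracSM_le e x y

end IsM1Linear

variable [OpensMeasurableSpace X]

theorem isM1Linear_sInteg {f : X → ℝ} {K : ℝ≥0} (hf : LipschitzWith K f) :
    IsM1Linear e (sInteg · f) :=
  ⟨fun _ _ hμ hν => sInteg_add (hμ.integrable_of_lipschitzWith hf)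
    (hν.integrable_of_lipschitzWith hf), fun c μ _ => sInteg_smul c μ f⟩

theorem MemM1.kruNorm_sub_sum_diracSM_le (hμ : MemM1 e μ) (π : SimpleFunc X X)
    (hπ : Integrable (fun x => dist (π x) x) μ.totalVariation) :
    kruNorm e (μ - ∑ y ∈ π.range, μ (π ⁻¹' {y}) • diracSM y) ≤
      ∫ x, dist (π x) x ∂μ.totalVariation := by
  -- `ν` is the push-forward of `μ` along `π`.
  set ν := ∑ y ∈ π.range, μ (π ⁻¹' {y}) • diracSM y
  have hν : MemM1 e ν := memM1_sum_smul_diracSM _ _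
  have hpush {g : X → ℝ} {K : ℝ≥0} (hg : LipschitzWith K g) :
      sInteg ν g = sInteg μ (fun x => g (π x)) := by
    rw [(isM1Linear_sInteg (e := e) hg).map_sum_smul_diracSM, sInteg_comp_simpleFunc]
    simp only [sInteg_diracSM]
  have hmass : (μ - ν) Set.univ = 0 := by
    have hone := hpush (LipschitzWith.const (1 : ℝ))
    rw [sInteg_const, sInteg_const, one_mul, one_mul] at hone
    simp [hone]
  have hkr : krNorm e (μ - ν) ≤ ∫ x, dist (π x) x ∂μ.totalVariation := by
    refine krNorm_le (integral_nonneg fun _ => dist_nonneg) fun g _ hg => ?_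
    have hgμ := hμ.integrable_of_lipschitzWith hg
    have hgπ : Integrable (fun x => g (π x)) μ.totalVariation :=
      (π.map g).integrable_of_isFiniteMeasure
    rw [sInteg_sub hgμ (hν.integrable_of_lipschitzWith hg), hpush hg, ← sInteg_fun_sub hgμ hgπ]
    refine (le_abs_self _).trans ((abs_sInteg_le_integral_abs (hgμ.sub hgπ)).trans
      (integral_mono (hgμ.sub hgπ).abs hπ fun x => ?_))
    simpa [Real.dist_eq, dist_comm] using hg.dist_le_mul x (π x)
  rw [kruNorm_eq_abs_add_krNorm, hmass, abs_zero, zero_add]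
  exact hkr

theorem MemM1.exists_kruNorm_sub_sum_diracSM_le [TopologicalSpace.SeparableSpace X]
    (hμ : MemM1 e μ) {ε : ℝ} (hε : 0 < ε) :
    ∃ (s : Finset X) (c : X → ℝ), kruNorm e (μ - ∑ y ∈ s, c y • diracSM y) ≤ ε := by
  let π := SimpleFunc.approxOn id measurable_id Set.univ e trivial
  have hπ_le (n : ℕ) (x : X) : dist (π n x) x ≤ dist x e := by
    have hedist := SimpleFunc.edist_approxOn_le measurable_id (Set.mem_univ e) x n
    rw [edist_dist, edist_dist, ENNReal.ofReal_le_ofReal_iff dist_nonneg] at hedist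
    simpa [dist_comm] using hedist
  have hπ_meas (n : ℕ) : AEStronglyMeasurable (fun x => dist (π n x) x) μ.totalVariation :=
    ((π n).measurable.dist measurable_id).aestronglyMeasurable
  have hπ_int (n : ℕ) : Integrable (fun x => dist (π n x) x) μ.totalVariation :=
    hμ.integrable_dist.mono' (hπ_meas n) (Eventually.of_forall fun x => by
      simpa [abs_of_nonneg dist_nonneg] using hπ_le n x)
  have hlim : Tendsto (fun n => ∫ x, dist (π n x) x ∂μ.totalVariation) atTop (𝓝 0) := by
    have hdom := tendsto_integral_of_dominated_convergence (fun x => dist x e) hπ_meas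
      hμ.integrable_dist (fun n => Eventually.of_forall fun x => by
        simpa [abs_of_nonneg dist_nonneg] using hπ_le n x)
      (Eventually.of_forall fun x => (tendsto_iff_dist_tendsto_zero).1
        (SimpleFunc.tendsto_approxOn measurable_id (Set.mem_univ e) (by simp)))
    simpa using hdom
  obtain ⟨n, hn⟩ := (hlim.eventually (Iic_mem_nhds hε)).exists
  exact ⟨_, _, (hμ.kruNorm_sub_sum_diracSM_le (π n) (hπ_int n)).trans hn⟩

theorem IsM1Linear.eq_of_diracSM [TopologicalSpace.SeparableSpace X]
    {Φ Ψ : SignedMeasure X → ℝ} (hΦ : IsM1Linear e Φ) (hΨ : IsM1Linear e Ψ) {C D : ℝ}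
    (hΦC : ∀ μ, MemM1 e μ → |Φ μ| ≤ C * kruNorm e μ)
    (hΨD : ∀ μ, MemM1 e μ → |Ψ μ| ≤ D * kruNorm e μ)
    (h : ∀ x, Φ (diracSM x) = Ψ (diracSM x)) (hμ : MemM1 e μ) : Φ μ = Ψ μ := by
  refine eq_of_forall_dist_le fun ε hε => ?_
  have hA : 0 < |C| + |D| + 1 := by positivity
  obtain ⟨s, c, hs⟩ := hμ.exists_kruNorm_sub_sum_diracSM_le (div_pos hε hA)
  set ν := ∑ y ∈ s, c y • diracSM y
  have hν : MemM1 e ν := memM1_sum_smul_diracSM s c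
  have hμν := hμ.sub hν
  have hagree : Φ ν = Ψ ν := by
    simp only [ν, hΦ.map_sum_smul_diracSM, hΨ.map_sum_smul_diracSM, h]
  have hk := hμν.kruNorm_nonneg
  calc dist (Φ μ) (Ψ μ) = |Φ (μ - ν) - Ψ (μ - ν)| := by
        rw [Real.dist_eq, hΦ.map_sub hμ hν, hΨ.map_sub hμ hν, hagree, sub_sub_sub_cancel_right]
    _ ≤ |C| * kruNorm e (μ - ν) + |D| * kruNorm e (μ - ν) :=
        (abs_sub _ _).trans (add_le_add
          ((hΦC _ hμν).trans (by gcongr; exact le_abs_self C))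
          ((hΨD _ hμν).trans (by gcongr; exact le_abs_self D)))
    _ ≤ (|C| + |D| + 1) * (ε / (|C| + |D| + 1)) := by nlinarith
    _ = ε := mul_div_cancel₀ ε hA.ne'

end DualRepresentation

theorem kru_dual_eq_lip_general [TopologicalSpace.SeparableSpace Z] (e : Z) :
    (∀ f : Z → ℝ, (∃ K : ℝ≥0, LipschitzWith K f) →
      (∀ μ : SignedMeasure Z, MemM1 e μ → |sInteg μ f| ≤ lipNorm e f * kruNorm e μ) ∧
      lipNorm e f =
        sInf {C : ℝ | 0 ≤ C ∧
          ∀ μ : SignedMeasure Z, MemM1 e μ → |sInteg μ f| ≤ C * kruNorm e μ})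
    ∧
    (∀ Φ : SignedMeasure Z → ℝ,
      (∀ μ ν : SignedMeasure Z, MemM1 e μ → MemM1 e ν → Φ (μ + ν) = Φ μ + Φ ν) →
      (∀ (c : ℝ) (μ : SignedMeasure Z), MemM1 e μ → Φ (c • μ) = c * Φ μ) →
      (∃ C : ℝ, ∀ μ : SignedMeasure Z, MemM1 e μ → |Φ μ| ≤ C * kruNorm e μ) →
      ∃! f : Z → ℝ, (∃ K : ℝ≥0, LipschitzWith K f) ∧
        ∀ μ : SignedMeasure Z, MemM1 e μ → Φ μ = sInteg μ f) := by
  refine ⟨fun f hf => ⟨fun μ hμ => hμ.abs_sInteg_le_lipNorm_mul_kruNorm hf,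
    (isLeast_lipNorm hf).csInf_eq.symm⟩, ?_⟩
  rintro Φ hadd hsmul ⟨C, hC⟩
  have hΦ : IsM1Linear e Φ := ⟨hadd, hsmul⟩
  have hf := hΦ.lipschitzWith_diracSM hC
  refine ⟨fun x => Φ (diracSM x), ⟨⟨_, hf⟩, fun μ hμ => ?_⟩, ?_⟩
  · exact hΦ.eq_of_diracSM (isM1Linear_sInteg hf) hC
      (fun ν hν => hν.abs_sInteg_le_lipNorm_mul_kruNorm ⟨_, hf⟩)
      (fun x => (sInteg_diracSM x fun y => Φ (diracSM y)).symm) hμ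
  · rintro g ⟨-, hg⟩
    funext x
    rw [hg _ (memM1_diracSM e x), sInteg_diracSM]

/-- `(KRu(Z))* ≅ Lip(Z)` isometrically, the pairing being integration against
measures in `M_1(Z)` (a bounded linear functional on a dense subspace determines uniquely a
bounded linear functional on the completion, so the dual of `KRu(Z)` is the space of linear
functionals on `M_1(Z)` that are bounded for the `KRu` norm).  Concretely:
(i) every Lipschitz function `f` induces via integration a `KRu`-bounded linear functional on
`M_1(Z)` whose operator norm is exactly `‖f‖_Lip = max {|f(e)|, L(f)}`; and
(ii) every `KRu`-bounded linear functional on `M_1(Z)` is given by integration against a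
unique Lipschitz function. -/
theorem kru_dual_eq_lip [LocallyCompactSpace Z] [CompleteSpace Z]
    [TopologicalSpace.SeparableSpace Z] (hgeo : IsGeodesic Z) (e : Z) :
    (∀ f : Z → ℝ, (∃ K : ℝ≥0, LipschitzWith K f) →
      (∀ μ : SignedMeasure Z, MemM1 e μ → |sInteg μ f| ≤ lipNorm e f * kruNorm e μ) ∧
      lipNorm e f =
        sInf {C : ℝ | 0 ≤ C ∧
          ∀ μ : SignedMeasure Z, MemM1 e μ → |sInteg μ f| ≤ C * kruNorm e μ})
    ∧
    (∀ Φ : SignedMeasure Z → ℝ,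
      (∀ μ ν : SignedMeasure Z, MemM1 e μ → MemM1 e ν → Φ (μ + ν) = Φ μ + Φ ν) →
      (∀ (c : ℝ) (μ : SignedMeasure Z), MemM1 e μ → Φ (c • μ) = c * Φ μ) →
      (∃ C : ℝ, ∀ μ : SignedMeasure Z, MemM1 e μ → |Φ μ| ≤ C * kruNorm e μ) →
      ∃! f : Z → ℝ, (∃ K : ℝ≥0, LipschitzWith K f) ∧
        ∀ μ : SignedMeasure Z, MemM1 e μ → Φ μ = sInteg μ f) :=
  kru_dual_eq_lip_general e
end
end

section
/- Let H be a Hilbert space and let A : KRu(ℝ^{d+1}) → H be defined by Aμ = ∫_{ℝ^{d+1}} φ(z) dμ(z), where φ : ℝ^{d+1} → H is Lipschitz and positively 1-homogeneous (φ(tz) = t φ(z) for t > 0). Take Z = ℝ^{d+1} with the Euclidean distance and the origin as base point. Then the problem inf_{μ ∈ KRu(ℝ^{d+1})} F(Aμ) + G_{α,β}(μ) with p = 1 either has μ = 0 as a minimizer or does not admit any minimizer. -/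
/-!
If a minimizer `μ ≠ 0` existed, the competitor `ν = ½ (z ↦ 2z)_# μ` would do strictly better.
By positive 1-homogeneity of `φ`, `∫ φ dν = ∫ φ dμ`. The map `f ↦ ½ f(2 ·)` permutes the
1-Lipschitz functions vanishing at `0`, so the balanced Kantorovich–Rubinstein part of the norm
is unchanged, while `|ν(Z)| = ½ |μ(Z)|`. Finally the first moment `∫ ‖z‖ d|ν|` equals that of `μ`
but the total mass is halved, so the `β`-term decreases strictly.
-/

open MeasureTheory Filter Topology
open scoped ENNReal NNReal

noncomputable section
attribute [local instance] Classical.propDecidable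

variable {Z : Type*} [MetricSpace Z] [MeasurableSpace Z] [BorelSpace Z]

/-- Vector-valued integral of `φ` against a signed measure, via Jordan decomposition. -/
def vInteg {H : Type*} [NormedAddCommGroup H] [NormedSpace ℝ H]
    (μ : SignedMeasure Z) (φ : Z → H) : H :=
  (∫ z, φ z ∂μ.toJordanDecomposition.posPart) - ∫ z, φ z ∂μ.toJordanDecomposition.negPart

namespace MeasureTheory

section Map

variable {α β : Type*} [MeasurableSpace α] [MeasurableSpace β]

def JordanDecomposition.map (e : α ≃ᵐ β) (j : JordanDecomposition α) : JordanDecomposition β where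
  posPart := j.posPart.map e
  negPart := j.negPart.map e
  mutuallySingular := e.measurableEmbedding.mutuallySingular_map j.mutuallySingular

namespace SignedMeasure

theorem toJordanDecomposition_map (s : SignedMeasure α) (e : α ≃ᵐ β) :
    toJordanDecomposition (s.map e) = s.toJordanDecomposition.map e := by
  refine toJordanDecomposition_eq (VectorMeasure.ext fun i hi => ?_)
  rw [VectorMeasure.map_apply _ e.measurable hi, JordanDecomposition.toSignedMeasure,
    Measure.toSignedMeasure_sub_apply hi, apply_eq_posPart_real_sub_negPart_real _ (e.measurable hi)]
  simp [JordanDecomposition.map, Measure.real, e.map_apply]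

theorem totalVariation_map (s : SignedMeasure α) (e : α ≃ᵐ β) :
    totalVariation (s.map e) = s.totalVariation.map e := by
  rw [totalVariation, toJordanDecomposition_map, totalVariation, Measure.map_add _ _ e.measurable]
  rfl

theorem totalVariation_smul (s : SignedMeasure α) (r : ℝ≥0) :
    (r • s).totalVariation = r • s.totalVariation := by
  simp [totalVariation, toJordanDecomposition_smul, JordanDecomposition.smul_posPart,
    JordanDecomposition.smul_negPart, smul_add]

theorem totalVariation_univ_ne_zero {s : SignedMeasure α} (hs : s ≠ 0) :
    s.totalVariation Set.univ ≠ 0 := by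
  refine fun h => hs (VectorMeasure.ext fun i _ => ?_)
  exact null_of_totalVariation_zero s (measure_mono_null (Set.subset_univ i) h)

end SignedMeasure

end Map

end MeasureTheory

section Integral

variable {X Y H : Type*} [MeasurableSpace X] [MeasurableSpace Y] [NormedAddCommGroup H]
  [NormedSpace ℝ H]

theorem vInteg_map (s : SignedMeasure X) (e : X ≃ᵐ Y) (g : Y → H) :
    vInteg (s.map e) g = vInteg s (g ∘ e) := by
  simp only [vInteg, SignedMeasure.toJordanDecomposition_map, JordanDecomposition.map,
    integral_map_equiv, Function.comp_apply]

theorem vInteg_smul (s : SignedMeasure X) (r : ℝ≥0) (g : X → H) :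
    vInteg (r • s) g = (r : ℝ) • vInteg s g := by
  rw [vInteg, vInteg, SignedMeasure.toJordanDecomposition_smul, JordanDecomposition.smul_posPart,
    JordanDecomposition.smul_negPart, integral_smul_nnreal_measure, integral_smul_nnreal_measure,
    smul_sub, NNReal.smul_def, NNReal.smul_def]

theorem vInteg_const_smul (s : SignedMeasure X) (r : ℝ) (g : X → H) :
    vInteg s (fun z => r • g z) = r • vInteg s g := by
  rw [vInteg, vInteg, integral_smul, integral_smul, smul_sub]

end Integral

section Regularizer

variable {X : Type*} [MetricSpace X] [MeasurableSpace X] {e : X} {p α β : ℝ}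
  {s : SignedMeasure X}

theorem Gab_ne_bot : Gab e p α β s ≠ ⊥ := by
  unfold Gab
  split_ifs
  exacts [EReal.coe_ne_bot _, top_ne_bot]

theorem memMp_of_Gab_ne_top (h : Gab e p α β s ≠ ⊤) : MemMp e p s := by
  by_contra hs
  exact h (if_neg hs)

theorem Gab_of_memMp (h : MemMp e p s) :
    Gab e p α β s = ((α * kruNorm e s + β * (momLint e p s).toReal : ℝ) : EReal) :=
  if_pos h

end Regularizer

section FirstMoment

variable {E : Type*} [NormedAddCommGroup E] [MeasurableSpace E] {s : SignedMeasure E}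

theorem memMp_zero_one_iff : MemMp (0 : E) 1 s ↔ ∫⁻ z, ‖z‖ₑ ∂s.totalVariation < ⊤ := by
  simp [MemMp]

theorem momLint_zero_one :
    momLint (0 : E) 1 s = s.totalVariation Set.univ + ∫⁻ z, ‖z‖ₑ ∂s.totalVariation := by
  simp only [momLint, Real.rpow_one, dist_zero_right]
  simp_rw [ENNReal.ofReal_add zero_le_one (norm_nonneg _), ENNReal.ofReal_one, ofReal_norm]
  rw [lintegral_add_left measurable_const, lintegral_one]

theorem momLint_zero_one_ne_top (h : MemMp (0 : E) 1 s) : momLint (0 : E) 1 s ≠ ⊤ := by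
  rw [momLint_zero_one]
  exact ENNReal.add_ne_top.2 ⟨measure_ne_top _ _, (memMp_zero_one_iff.1 h).ne⟩

end FirstMoment

theorem LipschitzWith.inv_mul_comp_const_smul {E : Type*} [SeminormedAddCommGroup E]
    [NormedSpace ℝ E] {f : E → ℝ} (hf : LipschitzWith 1 f) {c : ℝ} (hc : c ≠ 0) :
    LipschitzWith 1 (fun z => c⁻¹ * f (c • z)) := by
  have h := (lipschitzWith_smul c⁻¹).comp (hf.comp (lipschitzWith_smul (β := E) c))
  rwa [one_mul, nnnorm_inv, inv_mul_cancel₀ (nnnorm_ne_zero_iff.2 hc)] at h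

namespace MeasureTheory.SignedMeasure

variable {E H : Type*} [NormedAddCommGroup E] [NormedSpace ℝ E] [MeasurableSpace E] [BorelSpace E]
  [NormedAddCommGroup H] [NormedSpace ℝ H]

def dilate (c : ℝ≥0) (s : SignedMeasure E) : SignedMeasure E :=
  c⁻¹ • s.map ((c : ℝ) • ·)

variable {c : ℝ≥0} (s : SignedMeasure E)

theorem dilate_eq_smul_map (hc : c ≠ 0) :
    s.dilate c = c⁻¹ • s.map (MeasurableEquiv.smul₀ (c : ℝ) (NNReal.coe_ne_zero.2 hc)) :=
  rfl

theorem dilate_apply_univ : s.dilate c Set.univ = (c : ℝ)⁻¹ * s Set.univ := by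
  rw [dilate, _root_.smul_apply, VectorMeasure.map_apply _ (measurable_const_smul _)
    MeasurableSet.univ, Set.preimage_univ, NNReal.smul_def, smul_eq_mul, NNReal.coe_inv]

theorem totalVariation_dilate (hc : c ≠ 0) :
    (s.dilate c).totalVariation = c⁻¹ • s.totalVariation.map ((c : ℝ) • ·) := by
  rw [dilate_eq_smul_map s hc, totalVariation_smul, totalVariation_map, MeasurableEquiv.coe_smul₀]

theorem totalVariation_dilate_apply_univ (hc : c ≠ 0) :
    (s.dilate c).totalVariation Set.univ = c⁻¹ • s.totalVariation Set.univ := by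
  rw [totalVariation_dilate s hc, Measure.smul_apply,
    Measure.map_apply (measurable_const_smul _) MeasurableSet.univ, Set.preimage_univ]

theorem lintegral_enorm_dilate (hc : c ≠ 0) :
    ∫⁻ z, ‖z‖ₑ ∂(s.dilate c).totalVariation = ∫⁻ z, ‖z‖ₑ ∂s.totalVariation := by
  rw [totalVariation_dilate s hc, lintegral_smul_measure,
    ← MeasurableEquiv.coe_smul₀ (NNReal.coe_ne_zero.2 hc), lintegral_map_equiv]
  simp only [MeasurableEquiv.coe_smul₀, enorm_smul, lintegral_const_mul _ measurable_enorm]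
  rw [ENNReal.smul_def, smul_eq_mul, ← mul_assoc, ENNReal.coe_inv hc, NNReal.enorm_eq,
    ENNReal.inv_mul_cancel (ENNReal.coe_ne_zero.2 hc) ENNReal.coe_ne_top, one_mul]

theorem vInteg_dilate (hc : c ≠ 0) (g : E → H) :
    vInteg (s.dilate c) g = (c : ℝ)⁻¹ • vInteg s (fun z => g ((c : ℝ) • z)) := by
  rw [dilate_eq_smul_map s hc, vInteg_smul, vInteg_map, NNReal.coe_inv]
  rfl

theorem vInteg_dilate_of_homogeneous (hc : c ≠ 0) {g : E → H}
    (hg : ∀ z, g ((c : ℝ) • z) = (c : ℝ) • g z) : vInteg (s.dilate c) g = vInteg s g := by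
  simp only [vInteg_dilate s hc, hg, vInteg_const_smul, smul_smul,
    inv_mul_cancel₀ (NNReal.coe_ne_zero.2 hc), one_smul]

theorem krNorm_dilate (hc : c ≠ 0) : krNorm 0 (s.dilate c) = krNorm 0 s := by
  have hc' : (c : ℝ) ≠ 0 := NNReal.coe_ne_zero.2 hc
  have hsInteg (f : E → ℝ) :
      sInteg (s.dilate c) f = sInteg s (fun z => (c : ℝ)⁻¹ * f ((c : ℝ) • z)) := by
    -- `sInteg` is `vInteg` with values in `ℝ`
    change vInteg (s.dilate c) f = _
    rw [vInteg_dilate s hc]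
    exact (vInteg_const_smul s _ _).symm
  unfold krNorm
  congr 1
  ext r
  constructor
  · rintro ⟨f, hf0, hf, rfl⟩
    exact ⟨_, by simp [hf0], hf.inv_mul_comp_const_smul hc', hsInteg f⟩
  · rintro ⟨f, hf0, hf, rfl⟩
    refine ⟨fun z => c * f ((c : ℝ)⁻¹ • z), by simp [hf0], ?_, ?_⟩
    · simpa using hf.inv_mul_comp_const_smul (inv_ne_zero hc')
    · simp [hsInteg, smul_smul, hc']

theorem kruNorm_dilate_le (hc : 1 ≤ c) : kruNorm 0 (s.dilate c) ≤ kruNorm 0 s := by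
  have hc0 : c ≠ 0 := (zero_lt_one.trans_le hc).ne'
  rw [kruNorm, kruNorm, ← krNorm, ← krNorm, krNorm_dilate s hc0, dilate_apply_univ, abs_mul,
    abs_of_nonneg (by positivity)]
  gcongr
  exact mul_le_of_le_one_left (abs_nonneg _) (inv_le_one_of_one_le₀ (by exact_mod_cast hc))

theorem momLint_dilate_lt (hc : 1 < c) (hs : s ≠ 0) (hmom : MemMp (0 : E) 1 s) :
    momLint (0 : E) 1 (s.dilate c) < momLint 0 1 s := by
  have hc0 : c ≠ 0 := (zero_lt_one.trans hc).ne'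
  rw [momLint_zero_one, momLint_zero_one, lintegral_enorm_dilate s hc0,
    totalVariation_dilate_apply_univ s hc0]
  refine ENNReal.add_lt_add_right (memMp_zero_one_iff.1 hmom).ne ?_
  have hinv : ((c⁻¹ : ℝ≥0) : ℝ≥0∞) < 1 := by exact_mod_cast inv_lt_one_of_one_lt₀ hc
  simpa [ENNReal.smul_def] using
    (ENNReal.mul_lt_mul_iff_left (totalVariation_univ_ne_zero hs) (measure_ne_top _ _)).2 hinv

theorem Gab_dilate_lt {α β : ℝ} (hα : 0 ≤ α) (hβ : 0 < β) (hc : 1 < c) (hs : s ≠ 0)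
    (hG : Gab 0 1 α β s ≠ ⊤) : Gab 0 1 α β (s.dilate c) < Gab 0 1 α β s := by
  have hmem := memMp_of_Gab_ne_top hG
  have hmem' : MemMp (0 : E) 1 (s.dilate c) := by
    rwa [memMp_zero_one_iff, lintegral_enorm_dilate s (zero_lt_one.trans hc).ne',
      ← memMp_zero_one_iff]
  have hmom : (momLint (0 : E) 1 (s.dilate c)).toReal < (momLint 0 1 s).toReal :=
    ENNReal.toReal_strict_mono (momLint_zero_one_ne_top hmem) (momLint_dilate_lt s hc hs hmem)
  rw [Gab_of_memMp hmem, Gab_of_memMp hmem', EReal.coe_lt_coe_iff]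
  exact add_lt_add_of_le_of_lt (mul_le_mul_of_nonneg_left (kruNorm_dilate_le s hc.le) hα)
    (mul_lt_mul_of_pos_left hmom hβ)

end MeasureTheory.SignedMeasure

theorem zero_minimizer_or_no_minimizer_p_one_general (d : ℕ)
    {H : Type*} [NormedAddCommGroup H] [InnerProductSpace ℝ H]
    (φ : EuclideanSpace ℝ (Fin (d + 1)) → H)
    (hφhom : ∀ t : ℝ, 0 < t → ∀ z : EuclideanSpace ℝ (Fin (d + 1)), φ (t • z) = t • φ z)
    (α β : ℝ) (hα : 0 ≤ α) (hβ : 0 < β)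
    (F : H → EReal)
    (hFnebot : ∀ x, F x ≠ ⊥) :
    (∀ μ : SignedMeasure (EuclideanSpace ℝ (Fin (d + 1))),
        F (vInteg (0 : SignedMeasure (EuclideanSpace ℝ (Fin (d + 1)))) φ) +
          Gab 0 1 α β (0 : SignedMeasure (EuclideanSpace ℝ (Fin (d + 1)))) ≤
        F (vInteg μ φ) + Gab 0 1 α β μ) ∨
    ¬ ∃ μmin : SignedMeasure (EuclideanSpace ℝ (Fin (d + 1))),
        ∀ μ : SignedMeasure (EuclideanSpace ℝ (Fin (d + 1))),
          F (vInteg μmin φ) + Gab 0 1 α β μmin ≤ F (vInteg μ φ) + Gab 0 1 α β μ := by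
  refine or_iff_not_imp_left.2 fun hzero ⟨μ, hmin⟩ => ?_
  push Not at hzero
  obtain ⟨μ₀, hμ₀⟩ := hzero
  have hlt := (hmin μ₀).trans_lt hμ₀
  have hμ : μ ≠ 0 := by
    rintro rfl
    exact hlt.false
  obtain ⟨hF, hG⟩ := (EReal.add_ne_top_iff_ne_top₂ (hFnebot _) Gab_ne_bot).1 hlt.ne_top
  have hdilate : vInteg (μ.dilate 2) φ = vInteg μ φ :=
    μ.vInteg_dilate_of_homogeneous two_ne_zero (hφhom _ (by positivity))
  have hbetter := EReal.add_lt_add_left_coe (μ.Gab_dilate_lt hα hβ one_lt_two hμ hG)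
    (F (vInteg μ φ)).toReal
  rw [EReal.coe_toReal hF (hFnebot _)] at hbetter
  have hdilated := hmin (μ.dilate 2)
  rw [hdilate] at hdilated
  exact hdilated.not_gt hbetter

/-- Take `Z = ℝ^{d+1}` with the Euclidean distance and the origin as base
point, let `φ : ℝ^{d+1} → H` be Lipschitz and positively 1-homogeneous, and let
`Aμ = ∫ φ dμ`.  Then the problem `inf_μ F(Aμ) + G_{α,β}(μ)` with `p = 1` either has
`μ = 0` as a minimizer or does not admit any minimizer. -/
theorem zero_minimizer_or_no_minimizer_p_one (d : ℕ)
    {H : Type*} [NormedAddCommGroup H] [InnerProductSpace ℝ H] [CompleteSpace H]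
    (φ : EuclideanSpace ℝ (Fin (d + 1)) → H) (K : ℝ≥0) (hφlip : LipschitzWith K φ)
    (hφhom : ∀ t : ℝ, 0 < t → ∀ z : EuclideanSpace ℝ (Fin (d + 1)), φ (t • z) = t • φ z)
    (α β : ℝ) (hα : 0 ≤ α) (hβ : 0 < β)
    (F : H → EReal)
    (hFnebot : ∀ x, F x ≠ ⊥) (hFproper : ∃ x, F x ≠ ⊤)
    (hFconvex : ∀ x y : H, ∀ a b : ℝ, 0 ≤ a → 0 ≤ b → a + b = 1 →
      F (a • x + b • y) ≤ (a : EReal) * F x + (b : EReal) * F y)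
    (hFcoercive : ∀ c : ℝ, ∃ R : ℝ, ∀ x : H, R ≤ ‖x‖ → (c : EReal) ≤ F x)
    (hFlsc : LowerSemicontinuous F) :
    (∀ μ : SignedMeasure (EuclideanSpace ℝ (Fin (d + 1))),
        F (vInteg (0 : SignedMeasure (EuclideanSpace ℝ (Fin (d + 1)))) φ) +
          Gab 0 1 α β (0 : SignedMeasure (EuclideanSpace ℝ (Fin (d + 1)))) ≤
        F (vInteg μ φ) + Gab 0 1 α β μ) ∨
    ¬ ∃ μmin : SignedMeasure (EuclideanSpace ℝ (Fin (d + 1))),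
        ∀ μ : SignedMeasure (EuclideanSpace ℝ (Fin (d + 1))),
          F (vInteg μmin φ) + Gab 0 1 α β μmin ≤ F (vInteg μ φ) + Gab 0 1 α β μ :=
  zero_minimizer_or_no_minimizer_p_one_general d φ hφhom α β hα hβ F hFnebot
end
end

section
/- For p ≥ 1, the extremal points of the unit ball B_{0,1} = {μ ∈ M_p(Z) : ∫_Z (1 + d(z,e)^p) d|μ|(z) ≤ 1} of the regularizer G_{0,1} are exactly the measures ± (1 + d(z,e)^p)^{-1} δ_z for z ∈ Z. -/
open MeasureTheory Filter Topology
open scoped ENNReal NNReal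

noncomputable section
attribute [local instance] Classical.propDecidable

variable {Z : Type*} [MetricSpace Z] [MeasurableSpace Z] [BorelSpace Z]

/-!
Write `‖μ‖_w = ∫ w d|μ|` with `w = 1 + d(·, e)^p > 0`, so that the ball is `{‖μ‖_w ≤ 1}`.
If `μ` is an extreme point, then `‖μ‖_w = 1`, since otherwise `μ` lies strictly between
`μ / ‖μ‖_w` and `0`; and for every measurable `A` one of `|μ|(A)`, `|μ|(Aᶜ)` vanishes, since
otherwise `μ` lies strictly between the normalizations of `μ|_A` and `μ|_Aᶜ`. On a countably
separated space such a zero-one measure `|μ|` is carried by a single point `z`, which forces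
`μ = ±w(z)⁻¹ δ_z`. Conversely, for `r = ±w(z)⁻¹` the functional `ν ↦ r ν{z}` is at most `r²` on
the ball, and a `ν` attaining `r²` has all of its `w`-mass at `z`, so `ν = r δ_z`: the maximizer is
unique, hence extreme.
-/

section Convex

variable {𝕜 E : Type*} [Field 𝕜] [LinearOrder 𝕜] [IsStrictOrderedRing 𝕜] [AddCommGroup E]
  [Module 𝕜 E] {A : Set E}

theorem zero_notMem_extremePoints_of_neg_mem {x : E} (hx : x ∈ A) (hnx : -x ∈ A) (hx₀ : x ≠ 0) :
    (0 : E) ∉ A.extremePoints 𝕜 := fun h ↦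
  hx₀ (h.2 hx hnx ⟨2⁻¹, 2⁻¹, by norm_num, by norm_num, by norm_num, by simp⟩)

theorem eq_smul_of_mem_extremePoints {x y z : E} {t : 𝕜} (hx : x ∈ A.extremePoints 𝕜)
    (ht₀ : 0 < t) (ht₁ : t < 1) (hy : t⁻¹ • y ∈ A) (hz : (1 - t)⁻¹ • z ∈ A) (hyz : y + z = x) :
    y = t • x := by
  have hseg : x ∈ openSegment 𝕜 (t⁻¹ • y) ((1 - t)⁻¹ • z) :=
    ⟨t, 1 - t, ht₀, sub_pos.2 ht₁, add_sub_cancel _ _, by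
      rw [smul_inv_smul₀ ht₀.ne', smul_inv_smul₀ (sub_pos.2 ht₁).ne', hyz]⟩
  rw [← hx.2 hy hz hseg, smul_inv_smul₀ ht₀.ne']

theorem mem_extremePoints_of_isMaxOn {x : E} (l : E →ₗ[𝕜] 𝕜) (hx : x ∈ A) (hmax : IsMaxOn l A x)
    (huniq : ∀ y ∈ A, l y = l x → y = x) : x ∈ A.extremePoints 𝕜 := by
  refine ⟨hx, fun y hy z hz ⟨a, b, ha, hb, hab, hyz⟩ ↦ huniq y hy ?_⟩
  have hly : l y ≤ l x := isMaxOn_iff.1 hmax y hy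
  have hlz : l z ≤ l x := isMaxOn_iff.1 hmax z hz
  have hsum : a * l y + b * l z = l x := by rw [← hyz, map_add, map_smul, map_smul]; rfl
  have hsplit : a * l x + b * l x = l x := by rw [← add_mul, hab, one_mul]
  have : a * l x ≤ a * l y := by linarith [mul_le_mul_of_nonneg_left hlz hb.le]
  exact le_antisymm hly (le_of_mul_le_mul_left this ha)

end Convex

namespace MeasureTheory

theorem setLIntegral_eq_zero_iff_of_ne_zero {X : Type*} [MeasurableSpace X] {ρ : Measure X}
    {f : X → ℝ≥0∞} (hf : Measurable f) (hf₀ : ∀ x, f x ≠ 0) {A : Set X} (hA : MeasurableSet A) :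
    ∫⁻ x in A, f x ∂ρ = 0 ↔ ρ A = 0 := by
  simp only [setLIntegral_eq_zero_iff hA hf, hf₀, imp_false, measure_eq_zero_iff_ae_notMem]

theorem Measure.exists_measure_compl_singleton_eq_zero {X : Type*} [MeasurableSpace X]
    [MeasurableSpace.CountablySeparated X] [Nonempty X] (ρ : Measure X)
    (h : ∀ A, MeasurableSet A → ρ A = 0 ∨ ρ Aᶜ = 0) : ∃ z, ρ {z}ᶜ = 0 :=
  Filter.exists_singleton_mem_of_forall_separating MeasurableSet (l := ae ρ) fun A hA ↦
    (h A hA).symm.imp mem_ae_iff.2 fun h ↦ mem_ae_iff.2 (by rwa [compl_compl])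

namespace SignedMeasure

variable {X : Type*} [MeasurableSpace X]

instance (μ : SignedMeasure X) : IsFiniteMeasure μ.variation := by
  rw [← μ.totalVariation_eq_variation]
  infer_instance

def applyₗ (s : Set X) : SignedMeasure X →ₗ[ℝ] ℝ where
  toFun μ := μ s
  map_add' _ _ := rfl
  map_smul' _ _ := rfl

theorem smul_dirac_apply_singleton [MeasurableSingletonClass X] (r : ℝ) (z : X) :
    (r • (Measure.dirac z).toSignedMeasure) {z} = r := by
  simp [Measure.toSignedMeasure_apply_measurable (measurableSet_singleton z), Measure.real]

theorem eq_smul_dirac_of_variation_compl_singleton_eq_zero [MeasurableSingletonClass X]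
    {μ : SignedMeasure X} {z : X} (h : μ.variation {z}ᶜ = 0) :
    μ = μ {z} • (Measure.dirac z).toSignedMeasure := by
  have hnull := (VectorMeasure.variation_apply_eq_zero (measurableSet_singleton z).compl).1 h
  ext s hs
  by_cases hz : z ∈ s
  · rw [← VectorMeasure.of_add_of_sdiff (measurableSet_singleton z) hs (by simpa),
      hnull _ (fun x hx ↦ hx.2) (hs.diff (measurableSet_singleton z))]
    simp [Measure.toSignedMeasure_apply_measurable hs, Measure.real, hz]
  · rw [hnull s (fun x hx h ↦ hz (h ▸ hx)) hs]
    simp [Measure.toSignedMeasure_apply_measurable hs, Measure.real, hz]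

def weightedVariation (w : X → ℝ) (μ : SignedMeasure X) : ℝ≥0∞ :=
  ∫⁻ x, ENNReal.ofReal (w x) ∂μ.variation

section

variable {w : X → ℝ} {μ : SignedMeasure X}

theorem weightedVariation_smul (r : ℝ) (μ : SignedMeasure X) :
    weightedVariation w (r • μ) = ENNReal.ofReal |r| * weightedVariation w μ := by
  rw [weightedVariation, VectorMeasure.variation_smul, lintegral_smul_measure,
    ← Real.enorm_eq_ofReal_abs]
  rfl

theorem weightedVariation_restrict {A : Set X} (hA : MeasurableSet A) :
    weightedVariation w (μ.restrict A) = ∫⁻ x in A, ENNReal.ofReal (w x) ∂μ.variation := by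
  rw [weightedVariation, VectorMeasure.variation_restrict hA]

theorem weightedVariation_smul_dirac [MeasurableSingletonClass X] (r : ℝ) (z : X) :
    weightedVariation w (r • (Measure.dirac z).toSignedMeasure) =
      ENNReal.ofReal |r| * ENNReal.ofReal (w z) := by
  rw [weightedVariation_smul, weightedVariation, Measure.variation_toSignedMeasure,
    lintegral_dirac]

theorem weightedVariation_smul_dirac_eq_one_iff [MeasurableSingletonClass X]
    (hw_pos : ∀ x, 0 < w x) {r : ℝ} {z : X} :
    weightedVariation w (r • (Measure.dirac z).toSignedMeasure) = 1 ↔ |r| = (w z)⁻¹ := by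
  rw [weightedVariation_smul_dirac, ← ENNReal.ofReal_mul (abs_nonneg r), ENNReal.ofReal_eq_one,
    mul_eq_one_iff_eq_inv₀ (hw_pos z).ne']

theorem weightedVariation_pos (hw : Measurable w) (hw_pos : ∀ x, 0 < w x) (hμ : μ ≠ 0) :
    0 < weightedVariation w μ := by
  rw [pos_iff_ne_zero, Ne, weightedVariation, ← setLIntegral_univ,
    setLIntegral_eq_zero_iff_of_ne_zero hw.ennreal_ofReal
      (fun x ↦ (ENNReal.ofReal_pos.2 (hw_pos x)).ne') MeasurableSet.univ,
    Measure.measure_univ_eq_zero, VectorMeasure.variation_eq_zero]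
  exact hμ

theorem weightedVariation_inv_smul_le_one {t : ℝ} (ht : 0 < t)
    (h : weightedVariation w μ ≤ ENNReal.ofReal t) : weightedVariation w (t⁻¹ • μ) ≤ 1 := by
  rw [weightedVariation_smul, abs_of_pos (inv_pos.2 ht), ENNReal.ofReal_inv_of_pos ht]
  exact ENNReal.inv_mul_le_iff (by positivity) ENNReal.ofReal_ne_top |>.2 (by simpa using h)

theorem weightedVariation_eq_one_of_mem_extremePoints (hw : Measurable w) (hw_pos : ∀ x, 0 < w x)
    (hμ : μ ∈ {ν : SignedMeasure X | weightedVariation w ν ≤ 1}.extremePoints ℝ) (hμ₀ : μ ≠ 0) :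
    weightedVariation w μ = 1 := by
  refine le_antisymm hμ.1 (not_lt.1 fun hμ₁ ↦ ?_)
  set t := (weightedVariation w μ).toReal
  have ht₀ : 0 < t := ENNReal.toReal_pos (weightedVariation_pos hw hw_pos hμ₀).ne' hμ₁.ne_top
  have ht₁ : t < 1 := ENNReal.toReal_lt_of_lt_ofReal (by rwa [ENNReal.ofReal_one])
  have hμt : μ = t • μ := eq_smul_of_mem_extremePoints hμ ht₀ ht₁
    (weightedVariation_inv_smul_le_one ht₀ (ENNReal.ofReal_toReal hμ₁.ne_top).ge)
    (by simp [weightedVariation]) (add_zero μ)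
  exact ht₁.ne (smul_left_injective ℝ hμ₀ (hμt.symm.trans (one_smul ℝ μ).symm))

theorem variation_eq_zero_or_compl_of_mem_extremePoints (hw : Measurable w)
    (hw_pos : ∀ x, 0 < w x)
    (hμ : μ ∈ {ν : SignedMeasure X | weightedVariation w ν ≤ 1}.extremePoints ℝ)
    (hμ₁ : weightedVariation w μ = 1) {A : Set X} (hA : MeasurableSet A) :
    μ.variation A = 0 ∨ μ.variation Aᶜ = 0 := by
  have hw₀ (x : X) : ENNReal.ofReal (w x) ≠ 0 := (ENNReal.ofReal_pos.2 (hw_pos x)).ne'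
  by_contra! ⟨hA₀, hAc₀⟩
  set a := ∫⁻ x in A, ENNReal.ofReal (w x) ∂μ.variation
  set b := ∫⁻ x in Aᶜ, ENNReal.ofReal (w x) ∂μ.variation
  have hab : a + b = 1 := (lintegral_add_compl _ hA).trans hμ₁
  have ha₀ : a ≠ 0 := mt (setLIntegral_eq_zero_iff_of_ne_zero hw.ennreal_ofReal hw₀ hA).1 hA₀
  have hb₀ : b ≠ 0 :=
    mt (setLIntegral_eq_zero_iff_of_ne_zero hw.ennreal_ofReal hw₀ hA.compl).1 hAc₀
  have ha_top : a ≠ ⊤ := ne_top_of_le_ne_top ENNReal.one_ne_top (hab ▸ le_self_add)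
  set t := a.toReal
  have ht₀ : 0 < t := ENNReal.toReal_pos ha₀ ha_top
  have ht₁ : t < 1 := ENNReal.toReal_lt_of_lt_ofReal <| by
    rw [ENNReal.ofReal_one, ← hab]
    exact ENNReal.lt_add_right ha_top hb₀
  have hb : b = ENNReal.ofReal (1 - t) := by
    rw [ENNReal.ofReal_sub _ ht₀.le, ENNReal.ofReal_one, ENNReal.ofReal_toReal ha_top, ← hab,
      ENNReal.add_sub_cancel_left ha_top]
  have hrestrict : μ.restrict A = t • μ := eq_smul_of_mem_extremePoints hμ ht₀ ht₁
    (weightedVariation_inv_smul_le_one ht₀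
      (by rw [weightedVariation_restrict hA, ENNReal.ofReal_toReal ha_top]))
    (weightedVariation_inv_smul_le_one (sub_pos.2 ht₁)
      (by rw [weightedVariation_restrict hA.compl]; exact hb.le))
    (VectorMeasure.restrict_add_restrict_compl hA)
  have := congrArg (fun ν : SignedMeasure X ↦ ν.variation Aᶜ) hrestrict
  simp only [VectorMeasure.variation_restrict hA, hA.compl, Measure.restrict_apply,
    Set.compl_inter_self, measure_empty, VectorMeasure.variation_smul, Measure.smul_apply,
    Measure.nnreal_smul_coe_apply, zero_eq_mul, ENNReal.coe_eq_zero, nnnorm_eq_zero] at this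
  exact this.elim ht₀.ne' hAc₀

end

section

variable [MeasurableSingletonClass X] {w : X → ℝ} {μ : SignedMeasure X}

theorem ofReal_mul_abs_apply_singleton_add_le (hw_pos : ∀ x, 0 < w x) (z : X) :
    ENNReal.ofReal (w z * |μ {z}|) + ∫⁻ x in {z}ᶜ, ENNReal.ofReal (w x) ∂μ.variation ≤
      weightedVariation w μ := by
  conv_rhs => rw [weightedVariation, ← lintegral_add_compl _ (measurableSet_singleton z)]
  rw [lintegral_singleton, ENNReal.ofReal_mul (hw_pos z).le, ← Real.enorm_eq_ofReal_abs]
  gcongr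
  exact VectorMeasure.enorm_measure_le_variation _ _

theorem abs_apply_singleton_le (hw_pos : ∀ x, 0 < w x) (hμ : weightedVariation w μ ≤ 1) (z : X) :
    |μ {z}| ≤ (w z)⁻¹ := by
  have h := le_self_add.trans ((ofReal_mul_abs_apply_singleton_add_le hw_pos z).trans hμ)
  rw [ENNReal.ofReal_le_one] at h
  rw [inv_eq_one_div]
  exact (le_div_iff₀' (hw_pos z)).2 h

theorem eq_smul_dirac_of_inv_le_abs_apply (hw : Measurable w) (hw_pos : ∀ x, 0 < w x)
    (hμ : weightedVariation w μ ≤ 1) {z : X} (hz : (w z)⁻¹ ≤ |μ {z}|) :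
    μ = μ {z} • (Measure.dirac z).toSignedMeasure := by
  refine eq_smul_dirac_of_variation_compl_singleton_eq_zero ?_
  have hone : 1 ≤ ENNReal.ofReal (w z * |μ {z}|) :=
    ENNReal.one_le_ofReal.2 ((inv_le_iff_one_le_mul₀' (hw_pos z)).1 hz)
  have hsum := (add_le_add_left hone _).trans
    ((ofReal_mul_abs_apply_singleton_add_le hw_pos z).trans hμ)
  rw [← setLIntegral_eq_zero_iff_of_ne_zero hw.ennreal_ofReal
    (fun x ↦ (ENNReal.ofReal_pos.2 (hw_pos x)).ne') (measurableSet_singleton z).compl]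
  exact le_zero_iff.1 <| (ENNReal.add_le_add_iff_left ENNReal.one_ne_top).1 <| by rwa [add_zero]

theorem smul_dirac_mem_extremePoints (hw : Measurable w) (hw_pos : ∀ x, 0 < w x) {z : X} {r : ℝ}
    (hr : |r| = (w z)⁻¹) :
    r • (Measure.dirac z).toSignedMeasure ∈
      {ν : SignedMeasure X | weightedVariation w ν ≤ 1}.extremePoints ℝ := by
  set μ := r • (Measure.dirac z).toSignedMeasure
  have hr₀ : r ≠ 0 := abs_pos.1 (hr ▸ inv_pos.2 (hw_pos z))
  have hμz : μ {z} = r := smul_dirac_apply_singleton r z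
  refine mem_extremePoints_of_isMaxOn (r • applyₗ {z})
    ((weightedVariation_smul_dirac_eq_one_iff hw_pos).2 hr).le (isMaxOn_iff.2 fun ν hν ↦ ?_)
    fun ν hν h ↦ ?_
  · change r * ν {z} ≤ r * μ {z}
    calc r * ν {z} ≤ |r| * |ν {z}| := (le_abs_self _).trans (abs_mul _ _).le
      _ ≤ |r| * (w z)⁻¹ := by gcongr; exact abs_apply_singleton_le hw_pos hν z
      _ = r * μ {z} := by rw [← hr, hμz, abs_mul_abs_self]
  · have hνz : ν {z} = r := mul_left_cancel₀ hr₀ (h.trans (congrArg (r * ·) hμz))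
    rw [eq_smul_dirac_of_inv_le_abs_apply hw hw_pos hν (by rw [hνz, hr]), hνz]

theorem ne_zero_of_mem_extremePoints [Nonempty X] (hw_pos : ∀ x, 0 < w x)
    (hμ : μ ∈ {ν : SignedMeasure X | weightedVariation w ν ≤ 1}.extremePoints ℝ) : μ ≠ 0 := by
  rintro rfl
  obtain ⟨z⟩ := ‹Nonempty X›
  have hmem (r : ℝ) (hr : |r| = (w z)⁻¹) : r • (Measure.dirac z).toSignedMeasure ∈
      {ν : SignedMeasure X | weightedVariation w ν ≤ 1} :=
    ((weightedVariation_smul_dirac_eq_one_iff hw_pos).2 hr).le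
  have hc : |(w z)⁻¹| = (w z)⁻¹ := abs_of_pos (inv_pos.2 (hw_pos z))
  refine zero_notMem_extremePoints_of_neg_mem (hmem _ hc) ?_ (fun h ↦ ?_) hμ
  · exact neg_smul (w z)⁻¹ (Measure.dirac z).toSignedMeasure ▸ hmem _ (by rwa [abs_neg])
  · have := smul_dirac_apply_singleton (w z)⁻¹ z
    rw [h, zero_apply] at this
    exact (inv_pos.2 (hw_pos z)).ne this

theorem exists_eq_smul_dirac_of_mem_extremePoints [MeasurableSpace.CountablySeparated X]
    [Nonempty X] (hw : Measurable w) (hw_pos : ∀ x, 0 < w x)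
    (hμ : μ ∈ {ν : SignedMeasure X | weightedVariation w ν ≤ 1}.extremePoints ℝ) :
    ∃ z, μ = (w z)⁻¹ • (Measure.dirac z).toSignedMeasure ∨
      μ = -((w z)⁻¹ • (Measure.dirac z).toSignedMeasure) := by
  have hμ₁ := weightedVariation_eq_one_of_mem_extremePoints hw hw_pos hμ
    (ne_zero_of_mem_extremePoints hw_pos hμ)
  obtain ⟨z, hz⟩ := μ.variation.exists_measure_compl_singleton_eq_zero fun A hA ↦
    variation_eq_zero_or_compl_of_mem_extremePoints hw hw_pos hμ hμ₁ hA
  have hμz := eq_smul_dirac_of_variation_compl_singleton_eq_zero hz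
  have habs : |μ {z}| = (w z)⁻¹ :=
    (weightedVariation_smul_dirac_eq_one_iff hw_pos).1 (hμz ▸ hμ₁)
  exact ⟨z, ((abs_eq (inv_pos.2 (hw_pos z)).le).1 habs).imp (fun h ↦ hμz.trans (by rw [h]))
    fun h ↦ hμz.trans (by rw [h]; exact neg_smul (w z)⁻¹ (Measure.dirac z).toSignedMeasure)⟩

theorem extremePoints_weightedVariation_ball [MeasurableSpace.CountablySeparated X] [Nonempty X]
    (hw : Measurable w) (hw_pos : ∀ x, 0 < w x) :
    {μ : SignedMeasure X | weightedVariation w μ ≤ 1}.extremePoints ℝ =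
      {μ | ∃ z, μ = (w z)⁻¹ • (Measure.dirac z).toSignedMeasure ∨
        μ = -((w z)⁻¹ • (Measure.dirac z).toSignedMeasure)} := by
  ext μ
  refine ⟨exists_eq_smul_dirac_of_mem_extremePoints hw hw_pos, ?_⟩
  rintro ⟨z, rfl | rfl⟩
  · exact smul_dirac_mem_extremePoints hw hw_pos (abs_of_pos (inv_pos.2 (hw_pos z)))
  · exact neg_smul (w z)⁻¹ (Measure.dirac z).toSignedMeasure ▸
      smul_dirac_mem_extremePoints hw hw_pos (by rw [abs_neg, abs_of_pos (inv_pos.2 (hw_pos z))])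

end

end SignedMeasure

end MeasureTheory

theorem extremePoints_G01_ball_general [TopologicalSpace.SeparableSpace Z] (e : Z) (p : ℝ) :
    Set.extremePoints ℝ {μ : SignedMeasure Z | MemMp e p μ ∧ momLint e p μ ≤ 1} =
      {μ : SignedMeasure Z | ∃ z : Z,
        μ = (1 + dist z e ^ p)⁻¹ • diracSM z ∨
        μ = -((1 + dist z e ^ p)⁻¹ • diracSM z)} := by
  have : Nonempty Z := ⟨e⟩
  have hball : {μ : SignedMeasure Z | MemMp e p μ ∧ momLint e p μ ≤ 1} =
      {μ | SignedMeasure.weightedVariation (fun z ↦ 1 + dist z e ^ p) μ ≤ 1} := by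
    ext μ
    have hmem (h : momLint e p μ ≤ 1) : MemMp e p μ :=
      (lintegral_mono fun z ↦ ENNReal.ofReal_le_ofReal (by simp)).trans_lt
        (h.trans_lt ENNReal.one_lt_top)
    rw [Set.mem_ofPred, Set.mem_ofPred, and_iff_right_of_imp hmem, momLint,
      μ.totalVariation_eq_variation]
    rfl
  rw [hball]
  exact SignedMeasure.extremePoints_weightedVariation_ball (by fun_prop) fun z ↦ by positivity

/-- For `p ≥ 1`, the extremal points of the unit ball
`B_{0,1} = {μ ∈ M_p(Z) : ∫ (1 + d(z,e)^p) d|μ| ≤ 1}` of `G_{0,1}` are exactly the measures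
`± (1 + d(z,e)^p)⁻¹ δ_z` for `z ∈ Z`. -/
theorem extremePoints_G01_ball [LocallyCompactSpace Z] [CompleteSpace Z]
    [TopologicalSpace.SeparableSpace Z] (hgeo : IsGeodesic Z) (e : Z)
    (p : ℝ) (hp : 1 ≤ p) :
    Set.extremePoints ℝ {μ : SignedMeasure Z | MemMp e p μ ∧ momLint e p μ ≤ 1} =
      {μ : SignedMeasure Z | ∃ z : Z,
        μ = (1 + dist z e ^ p)⁻¹ • diracSM z ∨
        μ = -((1 + dist z e ^ p)⁻¹ • diracSM z)} :=
  extremePoints_G01_ball_general e p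
end
end
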